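/- For the period-doubling word S, the Abelian complexity is O(log n): there is a constant C such that ρ^{(1)}_S(n) ≤ C·log(n+1) for all n ≥ 1. Moreover ρ^{(1)}_S(n) ≥ 2 for all n ≥ 1, so the lower Abelian complexity min_{m ≥ n} ρ^{(1)}_S(m) equals 2 for all n. -/

import Mathlib

/-- Number of occurrences of `x` as a factor of `u`. -/
def occ {α : Type*} [DecidableEq α] (u x : List α) : ℕ :=
  ((List.range (u.length + 1)).filter (fun i => decide (x <+: u.drop i))).length

/-- `k`-Abelian equivalence: same number of occurrences of every word of length at most `k`. -/
def KAbEq {α : Type*} [DecidableEq α] (k : ℕ) (u v : List α) : Prop :=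
  ∀ x : List α, x.length ≤ k → occ u x = occ v x

/-- The factor of the infinite word `w` of length `n` starting at position `i`. -/
def factorAt {α : Type*} (w : ℕ → α) (i n : ℕ) : List α :=
  (List.range n).map (fun j => w (i + j))

/-- `k`-Abelian complexity: the number of `k`-Abelian classes of length-`n` factors of `w`. -/
noncomputable def rho {α : Type*} [DecidableEq α] (k : ℕ) (w : ℕ → α) (n : ℕ) : ℕ :=
  Set.ncard { C : Set (List α) | ∃ i : ℕ,
    C = { v | (∃ j : ℕ, v = factorAt w j n) ∧ KAbEq k v (factorAt w i n) } }

/-!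
Write `onesCount S i n` for the number of `1`s in the factor of length `n` at position `i`.
Factors of equal length are Abelian equivalent iff they have the same number of `1`s, so
`ρ^{(1)}_S(n)` is the number of values of `onesCount S · n`. The prefix counts satisfy
`onesCount S 0 (2k) + onesCount S 0 k = k`, hence `onesCount S j (2n) + onesCount S (j / 2) n = n`:
the values at length `2n` are those at length `n` reflected. So the spread of the values is
preserved by doubling the length and grows by at most one when a letter is appended; it is
therefore at most `log₂ n + 1`, and at most `1` at lengths `2 ^ k`. The same identity shows by
induction from `n = 1` that there are always at least two values.
-/

section Occ

variable {α : Type*} [DecidableEq α]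

theorem occ_cons (b : α) (u x : List α) :
    occ (b :: u) x = occ u x + if x <+: b :: u then 1 else 0 := by
  simp only [occ, ← List.countP_eq_length_filter, List.length_cons]
  rw [List.range_succ_eq_map, List.countP_cons, List.countP_map]
  simp [Function.comp_def]

theorem occ_nil_right (u : List α) : occ u [] = u.length + 1 := by
  induction u with
  | nil => rfl
  | cons b u ih => simp [occ_cons, ih]

theorem occ_singleton (u : List α) (a : α) : occ u [a] = u.count a := by
  induction u with
  | nil => rfl
  | cons b u ih =>
    rw [occ_cons, ih, List.count_cons]
    simp [List.cons_prefix_cons, @eq_comm _ a b]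

theorem kAbEq_one_iff (u v : List α) :
    KAbEq 1 u v ↔ u.length = v.length ∧ ∀ a, u.count a = v.count a := by
  refine ⟨fun h => ⟨?_, fun a => ?_⟩, fun ⟨hlen, hcount⟩ x hx => ?_⟩
  · simpa [occ_nil_right] using h [] (by simp)
  · simpa [occ_singleton] using h [a] (by simp)
  · match x, hx with
    | [], _ => simp [occ_nil_right, hlen]
    | [a], _ => simp [occ_singleton, hcount]

theorem kAbEq_one_iff_of_bool (u v : List Bool) :
    KAbEq 1 u v ↔ u.length = v.length ∧ u.count true = v.count true := by
  rw [kAbEq_one_iff]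
  refine ⟨fun h => ⟨h.1, h.2 true⟩, fun ⟨hlen, htrue⟩ => ⟨hlen, ?_⟩⟩
  have hu := List.count_not_add_count u true
  have hv := List.count_not_add_count v true
  rintro (_ | _) <;> simp only [Bool.not_true] at hu hv <;> omega

end Occ

theorem Set.ncard_le_of_forall_le_add {s : Set ℕ} (hs : s.Nonempty) (d : ℕ)
    (h : ∀ x ∈ s, ∀ y ∈ s, x ≤ y + d) : s.ncard ≤ d + 1 := by
  have hsub : s ⊆ Set.Icc (sInf s) (sInf s + d) :=
    fun x hx => ⟨Nat.sInf_le hx, h x hx _ (Nat.sInf_mem hs)⟩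
  calc s.ncard ≤ (Set.Icc (sInf s) (sInf s + d)).ncard := Set.ncard_le_ncard hsub
    _ = d + 1 := by rw [Set.ncard_eq_toFinset_card', Set.toFinset_Icc, Nat.card_Icc]; omega

section BoolWord

variable (w : ℕ → Bool)

def onesCount (i n : ℕ) : ℕ := (factorAt w i n).count true

theorem length_factorAt (i n : ℕ) : (factorAt w i n).length = n := by
  simp [factorAt]

theorem factorAt_add (i m n : ℕ) :
    factorAt w i (m + n) = factorAt w i m ++ factorAt w (i + m) n := by
  simp [factorAt, List.range_add, Nat.add_assoc]

theorem onesCount_add (i m n : ℕ) :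
    onesCount w i (m + n) = onesCount w i m + onesCount w (i + m) n := by
  simp [onesCount, factorAt_add]

theorem onesCount_succ (i n : ℕ) :
    onesCount w i (n + 1) = onesCount w i n + (w (i + n)).toNat := by
  rw [onesCount_add]
  cases h : w (i + n) <;> simp [onesCount, factorAt, h]

theorem onesCount_le (i n : ℕ) : onesCount w i n ≤ n :=
  (List.count_le_length (l := factorAt w i n)).trans_eq (length_factorAt w i n)

theorem rho_one_eq_ncard_range_onesCount (n : ℕ) :
    rho 1 w n = (Set.range fun i => onesCount w i n).ncard := by
  let ofCount : ℕ → Set (List Bool) :=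
    fun m => {v | (∃ j, v = factorAt w j n) ∧ v.count true = m}
  have hclass : ∀ i, {v | (∃ j, v = factorAt w j n) ∧ KAbEq 1 v (factorAt w i n)} =
      ofCount (onesCount w i n) := by
    intro i
    ext v
    simp only [ofCount, Set.mem_ofPred_eq, and_congr_right_iff]
    rintro ⟨j, rfl⟩
    simp [kAbEq_one_iff_of_bool, length_factorAt, onesCount]
  have hinj : Set.InjOn ofCount (Set.range fun i => onesCount w i n) := by
    rintro _ ⟨i, rfl⟩ m' - he
    have hmem : factorAt w i n ∈ ofCount m' := he ▸ ⟨⟨i, rfl⟩, rfl⟩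
    exact hmem.2
  rw [rho, ← hinj.ncard_image, ← Set.range_comp]
  congr 1
  ext C
  simp [hclass, eq_comm]

theorem finite_range_onesCount (n : ℕ) : (Set.range fun i => onesCount w i n).Finite :=
  (Set.finite_Iic n).subset (Set.range_subset_iff.2 (onesCount_le w · n))

theorem rho_one_le_of_onesCount_le {n d : ℕ} (h : ∀ i j, onesCount w i n ≤ onesCount w j n + d) :
    rho 1 w n ≤ d + 1 := by
  rw [rho_one_eq_ncard_range_onesCount]
  exact Set.ncard_le_of_forall_le_add (Set.range_nonempty _) d (by
    rintro _ ⟨i, rfl⟩ _ ⟨j, rfl⟩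
    exact h i j)

theorem two_le_rho_one_of_onesCount_ne {n i j : ℕ} (h : onesCount w i n ≠ onesCount w j n) :
    2 ≤ rho 1 w n := by
  rw [rho_one_eq_ncard_range_onesCount]
  exact (Set.one_lt_ncard_iff (finite_range_onesCount w n)).2 ⟨_, _, ⟨i, rfl⟩, ⟨j, rfl⟩, h⟩

theorem onesCount_succ_le_add_of_le {n d : ℕ}
    (h : ∀ i j, onesCount w i n ≤ onesCount w j n + d) (i j : ℕ) :
    onesCount w i (n + 1) ≤ onesCount w j (n + 1) + (d + 1) := by
  have := h i j
  rw [onesCount_succ, onesCount_succ]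
  cases w (i + n) <;> cases w (j + n) <;> simp <;> omega

end BoolWord

section PeriodDoubling

variable {S : ℕ → Bool} (hS0 : ∀ n, S (2 * n) = false) (hS1 : ∀ n, S (2 * n + 1) = !S n)
include hS0

theorem onesCount_two_mul_add_one (i n : ℕ) :
    onesCount S (2 * i) (2 * n + 1) = onesCount S (2 * i) (2 * n) := by
  simp [onesCount_succ, ← Nat.mul_add, hS0]

include hS1

theorem onesCount_zero_two_mul_add_onesCount_zero (k : ℕ) :
    onesCount S 0 (2 * k) + onesCount S 0 k = k := by
  induction k with
  | zero => simp [onesCount, factorAt]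
  | succ k ih =>
    have hodd := onesCount_two_mul_add_one hS0 0 k
    rw [Nat.mul_zero] at hodd
    rw [Nat.mul_succ, onesCount_succ, hodd, onesCount_succ]
    simp only [Nat.zero_add, hS1]
    cases S k <;> simp <;> omega

theorem onesCount_two_mul_add_onesCount_div_two (j n : ℕ) :
    onesCount S j (2 * n) + onesCount S (j / 2) n = n := by
  have hprefix := onesCount_zero_two_mul_add_onesCount_zero hS0 hS1
  have hsplit := onesCount_add S 0
  have hodd := onesCount_two_mul_add_one hS0 0
  simp only [Nat.mul_zero, Nat.zero_add] at hsplit hodd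
  have h1 := hprefix (j / 2)
  have h2 := hprefix (j / 2 + n)
  have h3 := hsplit (j / 2) n
  rcases Nat.even_or_odd' j with ⟨i, rfl | rfl⟩
  · have h4 := hsplit (2 * i) (2 * n)
    rw [← Nat.mul_add] at h4
    simp only [Nat.mul_div_cancel_left i two_pos] at *
    omega
  · have h4 := hsplit (2 * i + 1) (2 * n)
    rw [Nat.add_right_comm, ← Nat.mul_add, hodd, hodd] at h4
    have hi : (2 * i + 1) / 2 = i := by omega
    simp only [hi] at *
    omega

theorem onesCount_two_mul_le_add_of_le {n d : ℕ}
    (h : ∀ i j, onesCount S i n ≤ onesCount S j n + d) (i j : ℕ) :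
    onesCount S i (2 * n) ≤ onesCount S j (2 * n) + d := by
  have hi := onesCount_two_mul_add_onesCount_div_two hS0 hS1 i n
  have hj := onesCount_two_mul_add_onesCount_div_two hS0 hS1 j n
  have := h (j / 2) (i / 2)
  omega

theorem onesCount_le_add_log (n i j : ℕ) :
    onesCount S i n ≤ onesCount S j n + (Nat.log 2 n + 1) := by
  induction n using Nat.strong_induction_on generalizing i j with
  | _ n ih =>
  rcases Nat.lt_or_ge n 2 with hn | hn
  · have := onesCount_le S i n
    omega
  rw [Nat.log_of_one_lt_of_le one_lt_two hn]
  obtain ⟨m, rfl | rfl⟩ := Nat.even_or_odd' n <;>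
  · have hhalf := onesCount_two_mul_le_add_of_le hS0 hS1 (ih m (by omega))
    have hodd := onesCount_succ_le_add_of_le S hhalf i j
    have heven := hhalf i j
    simp only [Nat.mul_div_cancel_left _ two_pos, Nat.mul_add_div two_pos] at *
    omega

theorem onesCount_two_pow_le_add_one (k i j : ℕ) :
    onesCount S i (2 ^ k) ≤ onesCount S j (2 ^ k) + 1 := by
  induction k generalizing i j with
  | zero => simpa using Nat.le_add_left _ _ |>.trans' (onesCount_le S i 1)
  | succ k ih => simpa [pow_succ'] using onesCount_two_mul_le_add_of_le hS0 hS1 ih i j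

theorem exists_onesCount_ne {n : ℕ} (hn : 1 ≤ n) : ∃ i j, onesCount S i n ≠ onesCount S j n := by
  induction n using Nat.strong_induction_on with
  | _ n ih =>
  rcases Nat.lt_or_ge n 2 with hn2 | hn2
  · obtain rfl : n = 1 := by omega
    refine ⟨0, 1, ?_⟩
    simp [onesCount, factorAt, hS0 0, hS1 0]
  obtain ⟨m, rfl | rfl⟩ := Nat.even_or_odd' n <;>
  · obtain ⟨i, j, hij⟩ := ih m (by omega) (by omega)
    refine ⟨2 * i, 2 * j, ?_⟩
    have hi := onesCount_two_mul_add_onesCount_div_two hS0 hS1 (2 * i) m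
    have hj := onesCount_two_mul_add_onesCount_div_two hS0 hS1 (2 * j) m
    simp only [Nat.mul_div_cancel_left _ two_pos, onesCount_two_mul_add_one hS0] at hi hj ⊢
    omega

end PeriodDoubling

theorem natLog_two_add_two_le_mul_log {n : ℕ} (hn : 1 ≤ n) :
    (Nat.log 2 n + 2 : ℝ) ≤ 3 / Real.log 2 * Real.log (n + 1) := by
  have hn' : (2 : ℝ) ≤ n + 1 := by exact_mod_cast Nat.succ_le_succ hn
  have hlog : (Nat.log 2 n : ℝ) ≤ Real.logb 2 (n + 1) :=
    (Real.natLog_le_logb n 2).trans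
      (Real.logb_le_logb_of_le one_lt_two (by positivity) (by simp))
  have hone : 1 ≤ Real.logb 2 (n + 1) := by
    rwa [Real.le_logb_iff_rpow_le one_lt_two (by positivity), Real.rpow_one]
  calc (Nat.log 2 n + 2 : ℝ) ≤ 3 * Real.logb 2 (n + 1) := by linarith
    _ = 3 / Real.log 2 * Real.log (n + 1) := by rw [Real.logb]; ring

theorem stmt9 (S : ℕ → Bool)
    (hS0 : ∀ n, S (2 * n) = false) (hS1 : ∀ n, S (2 * n + 1) = !S n) :
    (∃ C : ℝ, ∀ n : ℕ, 1 ≤ n → (rho 1 S n : ℝ) ≤ C * Real.log (n + 1)) ∧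
    (∀ n : ℕ, 1 ≤ n → 2 ≤ rho 1 S n) ∧
    (∀ n : ℕ, 1 ≤ n → sInf { r : ℕ | ∃ m : ℕ, n ≤ m ∧ r = rho 1 S m } = 2) := by
  have hlower (n : ℕ) (hn : 1 ≤ n) : 2 ≤ rho 1 S n := by
    obtain ⟨i, j, hij⟩ := exists_onesCount_ne hS0 hS1 hn
    exact two_le_rho_one_of_onesCount_ne S hij
  refine ⟨⟨3 / Real.log 2, fun n hn => ?_⟩, hlower, fun n hn => ?_⟩
  · have hupper : rho 1 S n ≤ Nat.log 2 n + 1 + 1 :=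
      rho_one_le_of_onesCount_le S (onesCount_le_add_log hS0 hS1 n)
    calc (rho 1 S n : ℝ) ≤ Nat.log 2 n + 2 := by exact_mod_cast hupper
      _ ≤ 3 / Real.log 2 * Real.log (n + 1) := natLog_two_add_two_le_mul_log hn
  · have hmem : 2 ∈ { r : ℕ | ∃ m : ℕ, n ≤ m ∧ r = rho 1 S m } :=
      ⟨2 ^ n, Nat.lt_two_pow_self.le, le_antisymm (hlower _ Nat.one_le_two_pow)
        (rho_one_le_of_onesCount_le S (onesCount_two_pow_le_add_one hS0 hS1 n))⟩
    refine le_antisymm (Nat.sInf_le hmem) (le_csInf ⟨2, hmem⟩ ?_)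
    rintro r ⟨m, hm, rfl⟩
    exact hlower m (hn.trans hm)
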